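/- Let H₁ and H₂ be real Hilbert spaces, R : H₁ → H₂ a bounded linear operator with adjoint R*, and y ∈ H₂ a point lying in the closure of the range of R. Then y belongs to the range of R if and only if the family of Tikhonov regularized solutions ψ_α := (αI + R*R)⁻¹ R* y has uniformly bounded norms for small α, i.e. if and only if there exists a constant C such that ‖ψ_α‖ ≤ C for all α ∈ (0, 1]. -/

import Mathlib

/-- The Tikhonov regularized solution `ψ_α = (α I + R* R)⁻¹ R* y`. -/
noncomputable def tikhonov
    {H₁ H₂ : Type*} [NormedAddCommGroup H₁] [InnerProductSpace ℝ H₁] [CompleteSpace H₁]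
    [NormedAddCommGroup H₂] [InnerProductSpace ℝ H₂] [CompleteSpace H₂]
    (R : H₁ →L[ℝ] H₂) (α : ℝ) (y : H₂) : H₁ :=
  Ring.inverse (α • (1 : H₁ →L[ℝ] H₁) + (ContinuousLinearMap.adjoint R).comp R)
    ((ContinuousLinearMap.adjoint R) y)

open ContinuousLinearMap RealInnerProductSpace

section Aux

variable {H₁ H₂ : Type*} [NormedAddCommGroup H₁] [InnerProductSpace ℝ H₁] [CompleteSpace H₁]
    [NormedAddCommGroup H₂] [InnerProductSpace ℝ H₂] [CompleteSpace H₂]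
    (R : H₁ →L[ℝ] H₂)

/-- abbreviation for the regularized operator -/
noncomputable def tikOp (α : ℝ) : H₁ →L[ℝ] H₁ :=
  α • (1 : H₁ →L[ℝ] H₁) + (ContinuousLinearMap.adjoint R).comp R

lemma tikOp_inner (α : ℝ) (x : H₁) :
    ⟪tikOp R α x, x⟫ = α * ‖x‖ ^ 2 + ‖R x‖ ^ 2 := by
  simp [tikOp, inner_add_left, real_inner_smul_left, real_inner_self_eq_norm_sq,
    ContinuousLinearMap.adjoint_inner_left]

lemma tikOp_selfAdjoint (α : ℝ) : IsSelfAdjoint (tikOp R α) := by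
  rw [IsSelfAdjoint, ContinuousLinearMap.star_eq_adjoint]
  simp [tikOp, map_add, ContinuousLinearMap.adjoint_comp, ContinuousLinearMap.adjoint_adjoint, ContinuousLinearMap.one_def, ContinuousLinearMap.adjoint_id]

lemma tikOp_isUnit {α : ℝ} (hα : 0 < α) : IsUnit (tikOp R α) := by
  refine ContinuousLinearMap.isUnit_of_forall_le_norm_inner_map _ (c := α.toNNReal)
    (by simpa using hα) fun x => ?_
  rw [tikOp_inner]
  have h1 : (0:ℝ) ≤ α * ‖x‖^2 + ‖R x‖^2 := by positivity
  rw [Real.norm_eq_abs, abs_of_nonneg h1]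
  have : ‖x‖^2 * α.toNNReal = α * ‖x‖^2 := by
    rw [Real.coe_toNNReal _ hα.le]; ring
  rw [this]
  nlinarith [sq_nonneg ‖R x‖]

lemma tikOp_apply_inverse {α : ℝ} (hα : 0 < α) (v : H₁) :
    tikOp R α (Ring.inverse (tikOp R α) v) = v := by
  have h := Ring.mul_inverse_cancel _ (tikOp_isUnit R hα)
  calc tikOp R α (Ring.inverse (tikOp R α) v)
      = (tikOp R α * Ring.inverse (tikOp R α)) v := rfl
    _ = v := by rw [h]; rfl

lemma tikOp_inverse_apply {α : ℝ} (hα : 0 < α) (u : H₁) :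
    Ring.inverse (tikOp R α) (tikOp R α u) = u := by
  have h := Ring.inverse_mul_cancel _ (tikOp_isUnit R hα)
  calc Ring.inverse (tikOp R α) (tikOp R α u)
      = (Ring.inverse (tikOp R α) * tikOp R α) u := rfl
    _ = u := by rw [h]; rfl

lemma tikOp_inner_ge {α : ℝ} (x : H₁) : α * ‖x‖ ^ 2 ≤ ⟪tikOp R α x, x⟫ := by
  rw [tikOp_inner]; nlinarith [sq_nonneg ‖R x‖]

lemma tikOp_symm (α : ℝ) (u v : H₁) : ⟪tikOp R α u, v⟫ = ⟪u, tikOp R α v⟫ :=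
  ((ContinuousLinearMap.isSelfAdjoint_iff_isSymmetric).1 (tikOp_selfAdjoint R α)) u v

lemma tikOp_inv_norm_le {α : ℝ} (hα : 0 < α) (v : H₁) :
    ‖Ring.inverse (tikOp R α) v‖ ≤ ‖v‖ / α := by
  set u := Ring.inverse (tikOp R α) v with hu
  have h1 : α * ‖u‖ ^ 2 ≤ ⟪tikOp R α u, u⟫ := tikOp_inner_ge R u
  rw [tikOp_apply_inverse R hα] at h1
  have h2 : ⟪v, u⟫ ≤ ‖v‖ * ‖u‖ := real_inner_le_norm v u
  rcases eq_or_lt_of_le (norm_nonneg u) with h | h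
  · rw [← h]; positivity
  · rw [le_div_iff₀ hα]
    nlinarith

lemma tikOp_inv_inner_nonneg {α : ℝ} (hα : 0 < α) (v : H₁) :
    0 ≤ ⟪v, Ring.inverse (tikOp R α) v⟫ := by
  set u := Ring.inverse (tikOp R α) v with hu
  have h1 : α * ‖u‖ ^ 2 ≤ ⟪tikOp R α u, u⟫ := tikOp_inner_ge R u
  rw [tikOp_apply_inverse R hα] at h1
  refine le_trans ?_ h1
  positivity

lemma tikOp_inv_inner_le {α : ℝ} (hα : 0 < α) (v : H₁) :
    ⟪v, Ring.inverse (tikOp R α) v⟫ ≤ ‖v‖ ^ 2 / α := by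
  have h1 := tikOp_inv_norm_le R hα v
  have h2 : ⟪v, Ring.inverse (tikOp R α) v⟫ ≤ ‖v‖ * ‖Ring.inverse (tikOp R α) v‖ :=
    real_inner_le_norm _ _
  calc ⟪v, Ring.inverse (tikOp R α) v⟫ ≤ ‖v‖ * (‖v‖ / α) :=
        h2.trans (by gcongr)
    _ = ‖v‖ ^ 2 / α := by ring

lemma norm_R_tikOp_inv_sq_le {α : ℝ} (hα : 0 < α) (v : H₁) :
    ‖R (Ring.inverse (tikOp R α) v)‖ ^ 2 ≤ ⟪v, Ring.inverse (tikOp R α) v⟫ := by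
  set u := Ring.inverse (tikOp R α) v with hu
  have h1 : ⟪tikOp R α u, u⟫ = α * ‖u‖ ^ 2 + ‖R u‖ ^ 2 := tikOp_inner R α u
  rw [tikOp_apply_inverse R hα] at h1
  nlinarith [sq_nonneg ‖u‖]

lemma tikhonov_def (α : ℝ) (y : H₂) :
    tikhonov R α y = Ring.inverse (tikOp R α) ((ContinuousLinearMap.adjoint R) y) := rfl

lemma tikOp_apply (α : ℝ) (x : H₁) :
    tikOp R α x = α • x + (ContinuousLinearMap.adjoint R) (R x) := rfl

/-- Forward bound: if `y = R x` then `‖ψ_α‖ ≤ 2‖x‖`. -/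
lemma tikhonov_norm_le_of_eq {α : ℝ} (hα : 0 < α) (x : H₁) :
    ‖tikhonov R α (R x)‖ ≤ 2 * ‖x‖ := by
  have key : x = α • (Ring.inverse (tikOp R α) x) + tikhonov R α (R x) := by
    have h1 : tikOp R α x = α • x + (ContinuousLinearMap.adjoint R) (R x) := rfl
    have h2 := tikOp_inverse_apply R hα x
    calc x = Ring.inverse (tikOp R α) (tikOp R α x) := h2.symm
      _ = Ring.inverse (tikOp R α) (α • x + (ContinuousLinearMap.adjoint R) (R x)) := by rw [h1]
      _ = α • (Ring.inverse (tikOp R α) x) + tikhonov R α (R x) := by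
          rw [map_add, map_smul]; rfl
  have h3 : tikhonov R α (R x) = x - α • (Ring.inverse (tikOp R α) x) :=
    eq_sub_of_add_eq (by rw [add_comm]; exact key.symm)
  rw [h3]
  have h4 : ‖α • (Ring.inverse (tikOp R α) x)‖ ≤ ‖x‖ := by
    rw [norm_smul, Real.norm_eq_abs, abs_of_pos hα]
    calc α * ‖Ring.inverse (tikOp R α) x‖ ≤ α * (‖x‖ / α) := by
          gcongr; exact tikOp_inv_norm_le R hα x
      _ = ‖x‖ := by field_simp
  calc ‖x - α • (Ring.inverse (tikOp R α) x)‖ ≤ ‖x‖ + ‖α • (Ring.inverse (tikOp R α) x)‖ :=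
        norm_sub_le _ _
    _ ≤ 2 * ‖x‖ := by linarith

/-- `ψ_β = ψ_α + (α-β) • B_β ψ_α` for `0 < β`, `0 < α`. -/
lemma tikhonov_diff {α β : ℝ} (hα : 0 < α) (hβ : 0 < β) (y : H₂) :
    tikhonov R β y = tikhonov R α y
      + (α - β) • (Ring.inverse (tikOp R β) (tikhonov R α y)) := by
  set ψ := tikhonov R α y with hψ
  have h1 : tikOp R β ψ + (α - β) • ψ = tikOp R α ψ := by
    rw [tikOp_apply, tikOp_apply]
    module
  have h2 : tikOp R α ψ = (ContinuousLinearMap.adjoint R) y := by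
    rw [hψ, tikhonov_def]; exact tikOp_apply_inverse R hα _
  have h3 : Ring.inverse (tikOp R β) (tikOp R β ψ + (α - β) • ψ) = tikhonov R β y := by
    rw [h1, h2, tikhonov_def]
  rw [← h3, map_add, map_smul, tikOp_inverse_apply R hβ]

/-- monotonicity key: `⟪ψ_α, ψ_β⟫ ≥ ‖ψ_α‖²` for `0 < β ≤ α`. -/
lemma tikhonov_inner_ge {α β : ℝ} (hα : 0 < α) (hβ : 0 < β) (hle : β ≤ α) (y : H₂) :
    ‖tikhonov R α y‖ ^ 2 ≤ ⟪tikhonov R α y, tikhonov R β y⟫ := by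
  rw [tikhonov_diff R hα hβ y, inner_add_right, real_inner_smul_right,
    real_inner_self_eq_norm_sq]
  have h1 := tikOp_inv_inner_nonneg R hβ (tikhonov R α y)
  nlinarith

lemma tikhonov_norm_mono {α β : ℝ} (hα : 0 < α) (hβ : 0 < β) (hle : β ≤ α) (y : H₂) :
    ‖tikhonov R α y‖ ≤ ‖tikhonov R β y‖ := by
  have h1 := tikhonov_inner_ge R hα hβ hle y
  have h2 : ⟪tikhonov R α y, tikhonov R β y⟫ ≤ ‖tikhonov R α y‖ * ‖tikhonov R β y‖ :=
    real_inner_le_norm _ _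
  rcases eq_or_lt_of_le (norm_nonneg (tikhonov R α y)) with h | h
  · rw [← h]; exact norm_nonneg _
  · nlinarith

lemma tikhonov_dist_sq_le {α β : ℝ} (hα : 0 < α) (hβ : 0 < β) (hle : β ≤ α) (y : H₂) :
    ‖tikhonov R β y - tikhonov R α y‖ ^ 2
      ≤ ‖tikhonov R β y‖ ^ 2 - ‖tikhonov R α y‖ ^ 2 := by
  have h1 := tikhonov_inner_ge R hα hβ hle y
  have h2 := norm_sub_sq_real (tikhonov R β y) (tikhonov R α y)
  rw [real_inner_comm] at h2
  nlinarith

/-- Residual estimate: `‖y - R ψ_α‖ ≤ 2‖y - R u‖ + √α ‖u‖` for every `u`. -/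
lemma tikhonov_residual {α : ℝ} (hα : 0 < α) (hα1 : α ≤ 1) (y : H₂) (u : H₁) :
    ‖y - R (tikhonov R α y)‖ ≤ 2 * ‖y - R u‖ + Real.sqrt α * ‖u‖ := by
  set B := Ring.inverse (tikOp R α) with hB
  set ψ := tikhonov R α y with hψ
  have key : u - ψ = α • (B u) + B ((ContinuousLinearMap.adjoint R) (R u - y)) := by
    have h1 : tikOp R α u - (ContinuousLinearMap.adjoint R) y
        = α • u + (ContinuousLinearMap.adjoint R) (R u - y) := by
      rw [tikOp_apply, map_sub]; abel
    have h2 : B (tikOp R α u - (ContinuousLinearMap.adjoint R) y) = u - ψ := by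
      rw [map_sub, tikOp_inverse_apply R hα, hψ, tikhonov_def]
    rw [← h2, h1, map_add, map_smul]
  have e1 : y - R ψ = (y - R u) + R (u - ψ) := by rw [map_sub]; abel
  -- bound ‖R (B u)‖ ≤ ‖u‖ / √α
  have b1 : ‖R (B u)‖ ≤ ‖u‖ / Real.sqrt α := by
    have h3 : ‖R (B u)‖ ^ 2 ≤ ‖u‖ ^ 2 / α :=
      (norm_R_tikOp_inv_sq_le R hα u).trans (tikOp_inv_inner_le R hα u)
    have h4 : (‖u‖ / Real.sqrt α) ^ 2 = ‖u‖ ^ 2 / α := by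
      rw [div_pow, Real.sq_sqrt hα.le]
    nlinarith [norm_nonneg (R (B u)), norm_nonneg u,
      Real.sqrt_pos.mpr hα, div_nonneg (norm_nonneg u) (Real.sqrt_nonneg α),
      sq_nonneg (‖R (B u)‖ - ‖u‖ / Real.sqrt α)]
  -- bound ‖R (B (R† w))‖ ≤ ‖w‖
  have b2 : ∀ w : H₂, ‖R (B ((ContinuousLinearMap.adjoint R) w))‖ ≤ ‖w‖ := by
    intro w
    set q := R (B ((ContinuousLinearMap.adjoint R) w)) with hq
    have h5 : ‖q‖ ^ 2 ≤ ⟪(ContinuousLinearMap.adjoint R) w,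
        B ((ContinuousLinearMap.adjoint R) w)⟫ := norm_R_tikOp_inv_sq_le R hα _
    have h6 : ⟪(ContinuousLinearMap.adjoint R) w,
        B ((ContinuousLinearMap.adjoint R) w)⟫ = ⟪w, q⟫ := by
      rw [hq, ← ContinuousLinearMap.adjoint_inner_left R]
    have h7 : ⟪w, q⟫ ≤ ‖w‖ * ‖q‖ := real_inner_le_norm _ _
    rcases eq_or_lt_of_le (norm_nonneg q) with h | h
    · rw [← h]; exact norm_nonneg _
    · nlinarith
  have hs : (0:ℝ) < Real.sqrt α := Real.sqrt_pos.mpr hα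
  have halpha : α / Real.sqrt α = Real.sqrt α := by
    rw [div_eq_iff (ne_of_gt hs), Real.mul_self_sqrt hα.le]
  calc ‖y - R ψ‖ = ‖(y - R u) + (α • R (B u)
        + R (B ((ContinuousLinearMap.adjoint R) (R u - y))))‖ := by
        rw [e1, key, map_add, map_smul]
    _ ≤ ‖y - R u‖ + (‖α • R (B u)‖ + ‖R (B ((ContinuousLinearMap.adjoint R) (R u - y)))‖) :=
        (norm_add_le _ _).trans (by gcongr; exact norm_add_le _ _)
    _ ≤ ‖y - R u‖ + (Real.sqrt α * ‖u‖ + ‖R u - y‖) := by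
        gcongr
        · rw [norm_smul, Real.norm_eq_abs, abs_of_pos hα]
          calc α * ‖R (B u)‖ ≤ α * (‖u‖ / Real.sqrt α) := by gcongr
            _ = (α / Real.sqrt α) * ‖u‖ := by ring
            _ = Real.sqrt α * ‖u‖ := by rw [halpha]
        · exact b2 _
    _ = 2 * ‖y - R u‖ + Real.sqrt α * ‖u‖ := by rw [norm_sub_rev (R u) y]; ring


end Aux

/-- For `y` in the closure of the range of `R`, membership of `y` in the range of `R` is
equivalent to uniform boundedness of the norms of the Tikhonov regularized solutions
`ψ_α = (α I + R* R)⁻¹ R* y` for `α ∈ (0, 1]`. -/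
theorem mem_range_iff_tikhonov_norm_bounded
    {H₁ H₂ : Type*} [NormedAddCommGroup H₁] [InnerProductSpace ℝ H₁] [CompleteSpace H₁]
    [NormedAddCommGroup H₂] [InnerProductSpace ℝ H₂] [CompleteSpace H₂]
    (R : H₁ →L[ℝ] H₂) (y : H₂) (hy : y ∈ closure (Set.range R)) :
    y ∈ Set.range R ↔ ∃ C : ℝ, ∀ α ∈ Set.Ioc (0 : ℝ) 1, ‖tikhonov R α y‖ ≤ C := by
  constructor
  · rintro ⟨x, rfl⟩
    exact ⟨2 * ‖x‖, fun α hα => tikhonov_norm_le_of_eq R hα.1 x⟩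
  · rintro ⟨C, hC⟩
    set f : ℝ → ℝ := fun α => ‖tikhonov R α y‖ with hf
    set S : Set ℝ := f '' Set.Ioc 0 1 with hS
    have hne : S.Nonempty := ⟨f 1, 1, ⟨one_pos, le_refl 1⟩, rfl⟩
    have hbdd : BddAbove S := ⟨C, by rintro t ⟨a, ha, rfl⟩; exact hC a ha⟩
    set s : ℝ := sSup S with hs
    have hub : ∀ α ∈ Set.Ioc (0:ℝ) 1, f α ≤ s := fun α hα => le_csSup hbdd ⟨α, hα, rfl⟩
    have hs0 : 0 ≤ s := le_trans (norm_nonneg _) (hub 1 ⟨one_pos, le_refl 1⟩)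
    -- choose the sequence of regularization parameters
    have hex : ∀ n : ℕ, ∃ a : ℝ, a ∈ Set.Ioc (0:ℝ) 1 ∧ a ≤ 1/(n+1) ∧ s - 1/(n+1) ≤ f a := by
      intro n
      have hpos : (0:ℝ) < 1/(n+1) := by positivity
      obtain ⟨t, ⟨β, hβ, rfl⟩, hlt⟩ := exists_lt_of_lt_csSup hne (by linarith : s - 1/(n+1) < s)
      refine ⟨min β (1/(n+1)), ⟨lt_min hβ.1 hpos, (min_le_left _ _).trans hβ.2⟩,
        min_le_right _ _, ?_⟩
      have hmono : f β ≤ f (min β (1/(n+1))) :=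
        tikhonov_norm_mono R hβ.1 (lt_min hβ.1 hpos) (min_le_left _ _) y
      linarith
    choose a ha₁ ha₂ ha₃ using hex
    -- pairwise estimate
    have pair : ∀ m n : ℕ, a m ≤ a n →
        ‖tikhonov R (a n) y - tikhonov R (a m) y‖ ^ 2 ≤ 2 * s / (n+1) := by
      intro m n hmn
      have h1 := tikhonov_dist_sq_le R (ha₁ n).1 (ha₁ m).1 hmn y
      have h2 : f (a m) ≤ s := hub _ (ha₁ m)
      have h3 : s - 1/(n+1) ≤ f (a n) := ha₃ n
      have h4 : (0:ℝ) ≤ f (a n) := norm_nonneg _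
      have h5 : f (a n) ≤ s := hub _ (ha₁ n)
      have hpos : (0:ℝ) < (n:ℝ)+1 := by positivity
      have key : ‖tikhonov R (a n) y - tikhonov R (a m) y‖ ^ 2
          ≤ f (a m) ^ 2 - f (a n) ^ 2 := by
        rw [norm_sub_rev]; exact h1
      have h6 : (0:ℝ) ≤ f (a m) := norm_nonneg _
      have hd : (0:ℝ) ≤ 1/((n:ℝ)+1) := by positivity
      have h7 : (s - f (a n)) * (s + f (a n)) ≤ (1/((n:ℝ)+1)) * (2*s) :=
        mul_le_mul (by linarith) (by linarith) (by linarith) hd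
      have h8 : 2 * s / ((n:ℝ)+1) = (1/((n:ℝ)+1)) * (2*s) := by ring
      rw [h8]
      nlinarith [h7, key, h2, h6]
    have pair' : ∀ m n : ℕ, ‖tikhonov R (a m) y - tikhonov R (a n) y‖ ^ 2
        ≤ 2 * s / (min m n + 1) := by
      intro m n
      rcases le_total (a m) (a n) with h | h
      · have := pair m n h
        rw [norm_sub_rev]
        refine this.trans (div_le_div_of_nonneg_left (by linarith) (by positivity) ?_)
        have h6 : ((min m n : ℕ):ℝ) ≤ (n:ℝ) := Nat.cast_le.mpr (min_le_right m n)
        linarith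
      · have := pair n m h
        refine this.trans (div_le_div_of_nonneg_left (by linarith) (by positivity) ?_)
        have h6 : ((min m n : ℕ):ℝ) ≤ (m:ℝ) := Nat.cast_le.mpr (min_le_left m n)
        linarith
    -- the sequence is Cauchy
    have hcauchy : CauchySeq (fun n => tikhonov R (a n) y) := by
      rw [Metric.cauchySeq_iff]
      intro ε hε
      obtain ⟨N, hN⟩ := exists_nat_gt (2 * s / (ε^2))
      refine ⟨N, fun m hm n hn => ?_⟩
      have h1 := pair' m n
      have hminN : (N:ℝ) ≤ (min m n : ℕ) := by
        exact_mod_cast Nat.cast_le.mpr (le_min hm hn)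
      have hpos : (0:ℝ) < (min m n : ℕ) + 1 := by positivity
      have h2 : 2 * s / ((min m n : ℕ) + 1) < ε ^ 2 := by
        rw [div_lt_iff₀ hpos]
        have h3 : 2 * s < ε^2 * ((N:ℝ)) + ε^2 := by
          have := (div_lt_iff₀ (by positivity : (0:ℝ) < ε^2)).mp hN
          nlinarith
        nlinarith [sq_nonneg ε, mul_pos (mul_pos hε hε) hpos]
      rw [dist_eq_norm]
      have h4 : ‖tikhonov R (a m) y - tikhonov R (a n) y‖ ^ 2 < ε ^ 2 := lt_of_le_of_lt h1 h2
      nlinarith [norm_nonneg (tikhonov R (a m) y - tikhonov R (a n) y)]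
    obtain ⟨x, hx⟩ := cauchySeq_tendsto_of_complete hcauchy
    refine ⟨x, ?_⟩
    -- R (ψ (a n)) tends to y
    have htend : Filter.Tendsto (fun n => R (tikhonov R (a n) y)) Filter.atTop (nhds y) := by
      rw [Metric.tendsto_atTop]
      intro ε hε
      obtain ⟨z, hz, hdz⟩ := Metric.mem_closure_iff.mp hy (ε/3) (by linarith)
      obtain ⟨u, rfl⟩ := hz
      obtain ⟨N, hN⟩ := exists_nat_gt (9 * ‖u‖^2 / ε^2)
      refine ⟨N, fun n hn => ?_⟩
      have hres := tikhonov_residual R (ha₁ n).1 (ha₁ n).2 y u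
      have h1 : ‖y - R u‖ < ε/3 := by rwa [dist_eq_norm] at hdz
      have h2 : Real.sqrt (a n) * ‖u‖ < ε/3 := by
        have ha : a n ≤ 1/(n+1) := ha₂ n
        have hb : Real.sqrt (a n) ≤ Real.sqrt (1/(n+1)) := Real.sqrt_le_sqrt ha
        have hc : Real.sqrt (1/(n+1)) * ‖u‖ < ε/3 := by
          rcases eq_or_lt_of_le (norm_nonneg u) with h | h
          · rw [← h, mul_zero]; linarith
          · have hd : (Real.sqrt (1/(n+1)) * ‖u‖)^2 = ‖u‖^2 / (n+1) := by
              rw [mul_pow, Real.sq_sqrt (by positivity : (0:ℝ) ≤ 1/((n:ℝ)+1))]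
              ring
            have hNn : (N:ℝ) ≤ n := by exact_mod_cast hn
            have he : ‖u‖^2 / ((n:ℝ)+1) < ε^2 / 9 := by
              rw [div_lt_div_iff₀ (by positivity) (by norm_num)]
              have := (div_lt_iff₀ (by positivity : (0:ℝ) < ε^2)).mp hN
              nlinarith [sq_nonneg ε, mul_pos hε hε]
            nlinarith [Real.sqrt_nonneg (1/((n:ℝ)+1)), mul_nonneg (Real.sqrt_nonneg (1/((n:ℝ)+1))) (norm_nonneg u)]
        calc Real.sqrt (a n) * ‖u‖ ≤ Real.sqrt (1/(n+1)) * ‖u‖ := by gcongr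
          _ < ε/3 := hc
      rw [dist_eq_norm, norm_sub_rev]
      calc ‖y - R (tikhonov R (a n) y)‖ ≤ 2 * ‖y - R u‖ + Real.sqrt (a n) * ‖u‖ := hres
        _ < 2 * (ε/3) + ε/3 := by linarith
        _ = ε := by ring
    have hRx : Filter.Tendsto (fun n => R (tikhonov R (a n) y)) Filter.atTop (nhds (R x)) :=
      (R.continuous.tendsto x).comp hx
    exact tendsto_nhds_unique hRx htend
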